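/- arXiv:2512.12486 — 2 statements merged into one kernel-verified Lean document; each statement's English description precedes it below -/
import Mathlib

section
/- Let n, m be positive natural numbers and A, B : Matrix (Fin n) (Fin m) ℝ. Then |val(A) − val(B)| ≤ max_{i,j} |A_{i,j} − B_{i,j}|, where val(M) := sup_{x ∈ Δ^{n−1}} inf_{y ∈ Δ^{m−1}} ∑_{i,j} x_i M_{i,j} y_j. -/
/-- Inner infimum `inf_{y ∈ Δ^{m-1}} ∑_{i,j} x_i M_{i,j} y_j`. -/
noncomputable def innerInf {n m : ℕ} (M : Matrix (Fin n) (Fin m) ℝ) (x : Fin n → ℝ) : ℝ :=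
  sInf ((fun y : Fin m → ℝ => ∑ i, ∑ j, x i * M i j * y j) '' stdSimplex ℝ (Fin m))

/-- The (lower) value of the zero-sum matrix game with payoff matrix `M`:
`val(M) = sup_{x ∈ Δ^{n-1}} inf_{y ∈ Δ^{m-1}} ∑_{i,j} x_i M_{i,j} y_j`. -/
noncomputable def matVal {n m : ℕ} (M : Matrix (Fin n) (Fin m) ℝ) : ℝ :=
  sSup ((fun x : Fin n → ℝ => innerInf M x) '' stdSimplex ℝ (Fin n))

/-- The entrywise sup-norm distance `max_{i,j} |A i j - B i j|`. -/
noncomputable def maxAbsDiff {n m : ℕ} (hn : 0 < n) (hm : 0 < m)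
    (A B : Matrix (Fin n) (Fin m) ℝ) : ℝ :=
  Finset.univ.sup' (Finset.univ_nonempty_iff.mpr ⟨(⟨0, hn⟩, ⟨0, hm⟩)⟩)
    fun p : Fin n × Fin m => |A p.1 p.2 - B p.1 p.2|

-- simplex membership of a vertex
lemma vertex_mem_stdSimplex {k : ℕ} (hk : 0 < k) :
    (fun j : Fin k => if j = ⟨0, hk⟩ then (1:ℝ) else 0) ∈ stdSimplex ℝ (Fin k) := by
  constructor
  · intro j; dsimp; split <;> norm_num
  · simp

lemma pay_bound {n m : ℕ} (M : Matrix (Fin n) (Fin m) ℝ) {x : Fin n → ℝ} {y : Fin m → ℝ}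
    (hx : x ∈ stdSimplex ℝ (Fin n)) (hy : y ∈ stdSimplex ℝ (Fin m))
    {C : ℝ} (hC : ∀ i j, |M i j| ≤ C) :
    |∑ i, ∑ j, x i * M i j * y j| ≤ C := by
  calc |∑ i, ∑ j, x i * M i j * y j|
      ≤ ∑ i, ∑ j, |x i * M i j * y j| := by
        refine (Finset.abs_sum_le_sum_abs _ _).trans ?_
        exact Finset.sum_le_sum fun i _ => Finset.abs_sum_le_sum_abs _ _
    _ ≤ ∑ i, ∑ j, x i * C * y j := by
        refine Finset.sum_le_sum fun i _ => Finset.sum_le_sum fun j _ => ?_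
        rw [abs_mul, abs_mul, abs_of_nonneg (hx.1 i), abs_of_nonneg (hy.1 j)]
        exact mul_le_mul_of_nonneg_right
          (mul_le_mul_of_nonneg_left (hC i j) (hx.1 i)) (hy.1 j)
    _ = C := by
        simp_rw [← Finset.mul_sum, hy.2, mul_one, ← Finset.sum_mul, hx.2, one_mul]

lemma innerInf_bddBelow {n m : ℕ} (M : Matrix (Fin n) (Fin m) ℝ) {x : Fin n → ℝ}
    (hx : x ∈ stdSimplex ℝ (Fin n)) {C : ℝ} (hC : ∀ i j, |M i j| ≤ C) :
    BddBelow ((fun y : Fin m → ℝ => ∑ i, ∑ j, x i * M i j * y j) '' stdSimplex ℝ (Fin m)) := by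
  refine ⟨-C, ?_⟩
  rintro v ⟨y, hy, rfl⟩
  exact neg_le_of_abs_le (pay_bound M hx hy hC)

lemma innerInf_le_innerInf {n m : ℕ} (hm : 0 < m) (A B : Matrix (Fin n) (Fin m) ℝ)
    {x : Fin n → ℝ} (hx : x ∈ stdSimplex ℝ (Fin n)) {C : ℝ} (hCA : ∀ i j, |A i j| ≤ C)
    {ε : ℝ} (hε : ∀ i j, |A i j - B i j| ≤ ε) :
    innerInf A x ≤ innerInf B x + ε := by
  have hne : (stdSimplex ℝ (Fin m)).Nonempty := ⟨_, vertex_mem_stdSimplex hm⟩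
  rw [← sub_le_iff_le_add]
  refine le_csInf (hne.image _) ?_
  rintro v ⟨y, hy, rfl⟩
  have h1 : innerInf A x ≤ ∑ i, ∑ j, x i * A i j * y j :=
    csInf_le (innerInf_bddBelow A hx hCA) ⟨y, hy, rfl⟩
  have h2 : ∑ i, ∑ j, x i * A i j * y j - ∑ i, ∑ j, x i * B i j * y j ≤ ε := by
    have : ∑ i, ∑ j, x i * A i j * y j - ∑ i, ∑ j, x i * B i j * y j
        = ∑ i, ∑ j, x i * (A i j - B i j) * y j := by
      rw [← Finset.sum_sub_distrib]
      refine Finset.sum_congr rfl fun i _ => ?_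
      rw [← Finset.sum_sub_distrib]
      refine Finset.sum_congr rfl fun j _ => by ring
    rw [this]
    exact le_of_abs_le (pay_bound (A - B) hx hy (by simpa using hε))
  linarith

lemma matVal_le {n m : ℕ} (hn : 0 < n) (hm : 0 < m) (A B : Matrix (Fin n) (Fin m) ℝ) :
    matVal A ≤ matVal B + maxAbsDiff hn hm A B := by
  set ε := maxAbsDiff hn hm A B with hεdef
  have hε : ∀ i j, |A i j - B i j| ≤ ε := fun i j =>
    Finset.le_sup' (f := fun p : Fin n × Fin m => |A p.1 p.2 - B p.1 p.2|)
      (Finset.mem_univ (i, j))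
  obtain ⟨CA, hCA⟩ : ∃ C, ∀ i j, |A i j| ≤ C := by
    classical
    refine ⟨Finset.univ.sup' (Finset.univ_nonempty_iff.mpr ⟨(⟨0, hn⟩, ⟨0, hm⟩)⟩)
      (fun p : Fin n × Fin m => |A p.1 p.2|), fun i j =>
      Finset.le_sup' (f := fun p : Fin n × Fin m => |A p.1 p.2|) (Finset.mem_univ (i, j))⟩
  obtain ⟨CB, hCB⟩ : ∃ C, ∀ i j, |B i j| ≤ C := by
    classical
    refine ⟨Finset.univ.sup' (Finset.univ_nonempty_iff.mpr ⟨(⟨0, hn⟩, ⟨0, hm⟩)⟩)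
      (fun p : Fin n × Fin m => |B p.1 p.2|), fun i j =>
      Finset.le_sup' (f := fun p : Fin n × Fin m => |B p.1 p.2|) (Finset.mem_univ (i, j))⟩
  have hneN : (stdSimplex ℝ (Fin n)).Nonempty := ⟨_, vertex_mem_stdSimplex hn⟩
  have hneM : (stdSimplex ℝ (Fin m)).Nonempty := ⟨_, vertex_mem_stdSimplex hm⟩
  have hbddB : BddAbove ((fun x : Fin n → ℝ => innerInf B x) '' stdSimplex ℝ (Fin n)) := by
    refine ⟨CB, ?_⟩
    rintro v ⟨x, hx, rfl⟩
    obtain ⟨y, hy⟩ := hneM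
    refine (csInf_le (innerInf_bddBelow B hx hCB) ⟨y, hy, rfl⟩).trans ?_
    exact le_of_abs_le (pay_bound B hx hy hCB)
  refine csSup_le (hneN.image _) ?_
  rintro v ⟨x, hx, rfl⟩
  have := innerInf_le_innerInf hm A B hx hCA hε
  have h2 : innerInf B x ≤ matVal B := le_csSup hbddB ⟨x, hx, rfl⟩
  linarith

/-- the matrix-game value is 1-Lipschitz with respect to the
entrywise supremum norm of the payoff matrix. -/
theorem matVal_abs_sub_le_maxAbsDiff {n m : ℕ} (hn : 0 < n) (hm : 0 < m)
    (A B : Matrix (Fin n) (Fin m) ℝ) :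
    |matVal A - matVal B| ≤ maxAbsDiff hn hm A B := by
  have h1 := matVal_le hn hm A B
  have h2 := matVal_le hn hm B A
  have heq : maxAbsDiff hn hm B A = maxAbsDiff hn hm A B := by
    unfold maxAbsDiff
    refine Finset.sup'_congr _ rfl fun p _ => ?_
    rw [abs_sub_comm]
  rw [heq] at h2
  rw [abs_sub_le_iff]
  constructor <;> linarith
end

section
/- (Theorem 1, Root error from frontier error.) Let S be a type, let n, m be positive natural numbers, let f : S → Fin n → Fin m → S be a deterministic transition function, let r : S → Fin n → Fin m → ℝ be a reward function, let γ ∈ [0,1], and let D be a natural number. Let V̂, V* : ℕ → S → ℝ be two families of depth-indexed value functions satisfying, for every depth d < D and every state s ∈ S, the minimax backup recursions V̂(d)(s) = val([r(s,i,j) + γ·V̂(d+1)(f(s,i,j))]_{i,j}) and V*(d)(s) = val([r(s,i,j) + γ·V*(d+1)(f(s,i,j))]_{i,j}), where val(M) := sup_{x ∈ Δ^{n−1}} inf_{y ∈ Δ^{m−1}} ∑_{i,j} x_i M_{i,j} y_j. If there is ε ≥ 0 such that |V̂(D)(s) − V*(D)(s)| ≤ ε for all s ∈ S (frontier error), then |V̂(0)(s)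 − V*(0)(s)| ≤ γ^D · ε for all s ∈ S. -/
namespace MatValAux

lemma simplex_nonneg {k : ℕ} {x : Fin k → ℝ} (hx : x ∈ stdSimplex ℝ (Fin k)) (i : Fin k) :
    0 ≤ x i := hx.1 i

lemma simplex_le_one {k : ℕ} {x : Fin k → ℝ} (hx : x ∈ stdSimplex ℝ (Fin k)) (i : Fin k) :
    x i ≤ 1 := by
  calc x i ≤ ∑ j, x j := Finset.single_le_sum (fun j _ => hx.1 j) (Finset.mem_univ i)
  _ = 1 := hx.2

lemma simplex_nonempty {k : ℕ} (hk : 0 < k) : (stdSimplex ℝ (Fin k)).Nonempty :=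
  ⟨Pi.single ⟨0, hk⟩ 1, single_mem_stdSimplex ℝ _⟩

/-- The payoff is bounded in absolute value by `∑∑|M i j|`, uniformly over the simplices. -/
lemma abs_payoff_le {n m : ℕ} (M : Matrix (Fin n) (Fin m) ℝ) {x : Fin n → ℝ} {y : Fin m → ℝ}
    (hx : x ∈ stdSimplex ℝ (Fin n)) (hy : y ∈ stdSimplex ℝ (Fin m)) :
    |∑ i, ∑ j, x i * M i j * y j| ≤ ∑ i, ∑ j, |M i j| := by
  calc |∑ i, ∑ j, x i * M i j * y j| ≤ ∑ i, |∑ j, x i * M i j * y j| :=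
        Finset.abs_sum_le_sum_abs _ _
    _ ≤ ∑ i, ∑ j, |x i * M i j * y j| :=
        Finset.sum_le_sum fun i _ => Finset.abs_sum_le_sum_abs _ _
    _ ≤ ∑ i, ∑ j, |M i j| := by
        refine Finset.sum_le_sum fun i _ => Finset.sum_le_sum fun j _ => ?_
        rw [abs_mul, abs_mul, abs_of_nonneg (hx.1 i), abs_of_nonneg (hy.1 j)]
        calc x i * |M i j| * y j ≤ 1 * |M i j| * 1 := by
              apply mul_le_mul (mul_le_mul (simplex_le_one hx i) le_rfl (abs_nonneg _)
                (by linarith [simplex_le_one hx i])) (simplex_le_one hy j) (hy.1 j)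
              positivity
          _ = |M i j| := by ring

lemma payoff_diff_le {n m : ℕ} (M M' : Matrix (Fin n) (Fin m) ℝ) {δ : ℝ}
    (h : ∀ i j, |M i j - M' i j| ≤ δ)
    {x : Fin n → ℝ} {y : Fin m → ℝ}
    (hx : x ∈ stdSimplex ℝ (Fin n)) (hy : y ∈ stdSimplex ℝ (Fin m)) :
    |(∑ i, ∑ j, x i * M i j * y j) - ∑ i, ∑ j, x i * M' i j * y j| ≤ δ := by
  have key : (∑ i, ∑ j, x i * M i j * y j) - (∑ i, ∑ j, x i * M' i j * y j)
      = ∑ i, ∑ j, x i * (M i j - M' i j) * y j := by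
    rw [← Finset.sum_sub_distrib]
    refine Finset.sum_congr rfl fun i _ => ?_
    rw [← Finset.sum_sub_distrib]
    refine Finset.sum_congr rfl fun j _ => by ring
  rw [key]
  calc |∑ i, ∑ j, x i * (M i j - M' i j) * y j|
      ≤ ∑ i, ∑ j, |x i * (M i j - M' i j) * y j| := by
        refine le_trans (Finset.abs_sum_le_sum_abs _ _) ?_
        exact Finset.sum_le_sum fun i _ => Finset.abs_sum_le_sum_abs _ _
    _ ≤ ∑ i, ∑ j, x i * δ * y j := by
        refine Finset.sum_le_sum fun i _ => Finset.sum_le_sum fun j _ => ?_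
        rw [abs_mul, abs_mul, abs_of_nonneg (hx.1 i), abs_of_nonneg (hy.1 j)]
        have := h i j
        have h1 : 0 ≤ x i := hx.1 i
        have h2 : 0 ≤ y j := hy.1 j
        exact mul_le_mul_of_nonneg_right (mul_le_mul_of_nonneg_left (h i j) h1) h2
    _ = δ := by
        have : ∀ i : Fin n, ∑ j, x i * δ * y j = x i * δ := by
          intro i; rw [← Finset.mul_sum, hy.2, mul_one]
        simp only [this, ← Finset.sum_mul, hx.2, one_mul]

lemma innerInf_bddBelow {n m : ℕ} (M : Matrix (Fin n) (Fin m) ℝ) {x : Fin n → ℝ}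
    (hx : x ∈ stdSimplex ℝ (Fin n)) :
    BddBelow ((fun y : Fin m → ℝ => ∑ i, ∑ j, x i * M i j * y j) '' stdSimplex ℝ (Fin m)) := by
  refine ⟨-(∑ i, ∑ j, |M i j|), ?_⟩
  rintro _ ⟨y, hy, rfl⟩
  have := abs_payoff_le M hx hy
  linarith [neg_abs_le (∑ i, ∑ j, x i * M i j * y j)]

lemma innerInf_le_payoff {n m : ℕ} (M : Matrix (Fin n) (Fin m) ℝ) {x : Fin n → ℝ}
    (hx : x ∈ stdSimplex ℝ (Fin n)) {y : Fin m → ℝ} (hy : y ∈ stdSimplex ℝ (Fin m)) :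
    innerInf M x ≤ ∑ i, ∑ j, x i * M i j * y j :=
  csInf_le (innerInf_bddBelow M hx) ⟨y, hy, rfl⟩

lemma innerInf_le_const {n m : ℕ} (hm : 0 < m) (M : Matrix (Fin n) (Fin m) ℝ) {x : Fin n → ℝ}
    (hx : x ∈ stdSimplex ℝ (Fin n)) :
    innerInf M x ≤ ∑ i, ∑ j, |M i j| := by
  obtain ⟨y, hy⟩ := simplex_nonempty hm
  exact le_trans (innerInf_le_payoff M hx hy)
    (le_trans (le_abs_self _) (abs_payoff_le M hx hy))

lemma innerInf_le_add {n m : ℕ} (hm : 0 < m) (M M' : Matrix (Fin n) (Fin m) ℝ) {δ : ℝ}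
    (h : ∀ i j, |M i j - M' i j| ≤ δ) {x : Fin n → ℝ} (hx : x ∈ stdSimplex ℝ (Fin n)) :
    innerInf M x ≤ innerInf M' x + δ := by
  have : innerInf M x - δ ≤ innerInf M' x := by
    refine le_csInf ((simplex_nonempty hm).image _) ?_
    rintro _ ⟨y, hy, rfl⟩
    have h1 := innerInf_le_payoff M hx hy
    have h2 := payoff_diff_le M M' h hx hy
    have := abs_sub_le_iff.mp h2
    linarith [this.1]
  linarith

lemma matVal_le_add {n m : ℕ} (hn : 0 < n) (hm : 0 < m) (M M' : Matrix (Fin n) (Fin m) ℝ)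
    {δ : ℝ} (h : ∀ i j, |M i j - M' i j| ≤ δ) :
    matVal M ≤ matVal M' + δ := by
  refine csSup_le ((simplex_nonempty hn).image _) ?_
  rintro _ ⟨x, hx, rfl⟩
  have h1 : innerInf M' x ≤ matVal M' := by
    refine le_csSup ⟨∑ i, ∑ j, |M' i j|, ?_⟩ ⟨x, hx, rfl⟩
    rintro _ ⟨x', hx', rfl⟩
    exact innerInf_le_const hm M' hx'
  linarith [innerInf_le_add hm M M' h hx]

lemma abs_matVal_sub_le {n m : ℕ} (hn : 0 < n) (hm : 0 < m) (M M' : Matrix (Fin n) (Fin m) ℝ)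
    {δ : ℝ} (h : ∀ i j, |M i j - M' i j| ≤ δ) :
    |matVal M - matVal M'| ≤ δ := by
  have h' : ∀ i j, |M' i j - M i j| ≤ δ := fun i j => by rw [abs_sub_comm]; exact h i j
  have := matVal_le_add hn hm M M' h
  have := matVal_le_add hn hm M' M h'
  rw [abs_sub_le_iff]
  constructor <;> linarith

end MatValAux

/-- Theorem 1, root error from frontier error: a depth-`D` minimax
backup tree search with frontier value error at most `ε` has root value error at
most `γ^D · ε`. -/
theorem root_error_from_frontier_error {S : Type*} {n m : ℕ} (hn : 0 < n) (hm : 0 < m)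
    (f : S → Fin n → Fin m → S) (r : S → Fin n → Fin m → ℝ)
    (γ : ℝ) (hγ0 : 0 ≤ γ) (hγ1 : γ ≤ 1) (D : ℕ)
    (Vhat Vstar : ℕ → S → ℝ)
    (hVhat : ∀ d < D, ∀ s : S,
      Vhat d s = matVal (Matrix.of fun i j => r s i j + γ * Vhat (d + 1) (f s i j)))
    (hVstar : ∀ d < D, ∀ s : S,
      Vstar d s = matVal (Matrix.of fun i j => r s i j + γ * Vstar (d + 1) (f s i j)))
    (ε : ℝ) (hε : 0 ≤ ε)
    (hfrontier : ∀ s : S, |Vhat D s - Vstar D s| ≤ ε) :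
    ∀ s : S, |Vhat 0 s - Vstar 0 s| ≤ γ ^ D * ε := by
  have key : ∀ k d, d + k = D → ∀ s : S, |Vhat d s - Vstar d s| ≤ γ ^ k * ε := by
    intro k
    induction k with
    | zero =>
      intro d hd s
      simp only [add_zero] at hd
      subst hd
      simpa using hfrontier s
    | succ k ih =>
      intro d hd s
      have hdD : d < D := by omega
      rw [hVhat d hdD s, hVstar d hdD s]
      have hentry : ∀ i j,
          |(Matrix.of fun i j => r s i j + γ * Vhat (d + 1) (f s i j)) i j -
           (Matrix.of fun i j => r s i j + γ * Vstar (d + 1) (f s i j)) i j|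
          ≤ γ * (γ ^ k * ε) := by
        intro i j
        simp only [Matrix.of_apply]
        have : r s i j + γ * Vhat (d + 1) (f s i j) -
            (r s i j + γ * Vstar (d + 1) (f s i j))
            = γ * (Vhat (d + 1) (f s i j) - Vstar (d + 1) (f s i j)) := by ring
        rw [this, abs_mul, abs_of_nonneg hγ0]
        exact mul_le_mul_of_nonneg_left (ih (d + 1) (by omega) (f s i j)) hγ0
      have := MatValAux.abs_matVal_sub_le hn hm _ _ hentry
      calc _ ≤ γ * (γ ^ k * ε) := this
        _ = γ ^ (k + 1) * ε := by ring
  simpa using key D 0 (by omega)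
end
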